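/- Let N = 3 and let R be the additive subgroup of (Fin 4 → ZMod 3) generated by the two rows (1,1,1,0) and (0,0,2,1). Then S(R) = 1, i.e. S(R) = s − 3 for s = 4. (This is the verification that the second genus-4 family of Table 1, with Galois group Z/3 × Z/3, N = 3 and monodromy data {(1,0),(1,0),(1,2),(0,1)}, generates a Shimura subvariety: dim S(G) = s − 3.) -/
import Mathlib

open Finset

noncomputable def paperD {s : ℕ} (N : ℕ) (α : Fin s → ZMod N) : ℚ :=
  -1 + (1 / (N : ℚ)) * ∑ j, (((-α j).val : ℚ))

noncomputable def paperS {s N : ℕ} [NeZero N] (R : AddSubgroup (Fin s → ZMod N)) : ℚ :=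
  (1 / 2) * ∑ α ∈ ((R : Set (Fin s → ZMod N)).toFinite.toFinset.filter fun α => 2 • α ≠ 0),
      paperD N α * paperD N (-α)
  + (1 / 2) * ∑ α ∈ ((R : Set (Fin s → ZMod N)).toFinite.toFinset.filter
        fun α => α ≠ 0 ∧ 2 • α = 0),
      paperD N α * (paperD N α + 1)

def myF : Finset (Fin 4 → ZMod 3) :=
  { ![0,0,0,0], ![1,1,1,0], ![2,2,2,0], ![0,0,2,1], ![0,0,1,2],
    ![1,1,0,1], ![2,2,0,2], ![1,1,2,2], ![2,2,1,1] }

set_option maxRecDepth 4000 in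
def myR : AddSubgroup (Fin 4 → ZMod 3) where
  carrier := ↑myF
  zero_mem' := by decide
  add_mem' := by decide
  neg_mem' := by decide

lemma closure_eq_myR :
    AddSubgroup.closure {(![1, 1, 1, 0] : Fin 4 → ZMod 3), ![0, 0, 2, 1]} = myR := by
  apply le_antisymm
  · rw [AddSubgroup.closure_le]
    intro x hx
    rcases hx with h | h <;> subst h <;> exact (show _ ∈ myF by decide)
  · intro x hx
    have ha : (![1,1,1,0] : Fin 4 → ZMod 3) ∈
        AddSubgroup.closure {(![1, 1, 1, 0] : Fin 4 → ZMod 3), ![0, 0, 2, 1]} :=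
      AddSubgroup.subset_closure (by left; rfl)
    have hb : (![0,0,2,1] : Fin 4 → ZMod 3) ∈
        AddSubgroup.closure {(![1, 1, 1, 0] : Fin 4 → ZMod 3), ![0, 0, 2, 1]} :=
      AddSubgroup.subset_closure (by right; rfl)
    have hx' : x ∈ myF := hx
    fin_cases hx'
    · exact (by decide : (![0,0,0,0] : Fin 4 → ZMod 3) = 0) ▸ zero_mem _
    · exact ha
    · exact (by decide : (![2,2,2,0] : Fin 4 → ZMod 3) = ![1,1,1,0] + ![1,1,1,0]) ▸ add_mem ha ha
    · exact hb
    · exact (by decide : (![0,0,1,2] : Fin 4 → ZMod 3) = ![0,0,2,1] + ![0,0,2,1]) ▸ add_mem hb hb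
    · exact (by decide : (![1,1,0,1] : Fin 4 → ZMod 3) = ![1,1,1,0] + ![0,0,2,1]) ▸ add_mem ha hb
    · exact (by decide : (![2,2,0,2] : Fin 4 → ZMod 3) = ![1,1,1,0] + (![1,1,1,0] + (![0,0,2,1] + ![0,0,2,1]))) ▸ add_mem ha (add_mem ha (add_mem hb hb))
    · exact (by decide : (![1,1,2,2] : Fin 4 → ZMod 3) = ![1,1,1,0] + (![0,0,2,1] + ![0,0,2,1])) ▸ add_mem ha (add_mem hb hb)
    · exact (by decide : (![2,2,1,1] : Fin 4 → ZMod 3) = ![1,1,1,0] + (![1,1,1,0] + ![0,0,2,1])) ▸ add_mem ha (add_mem ha hb)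

lemma toFinset_myR :
    ((myR : Set (Fin 4 → ZMod 3)).toFinite.toFinset) = myF := by
  ext x
  rw [Set.Finite.mem_toFinset]
  exact Iff.rfl

/-- Table 1, second genus-4 family: `G = ℤ/3 × ℤ/3`, `N = 3`, monodromy data
`{(1,0),(1,0),(1,2),(0,1)}` (rows `(1,1,1,0)` and `(0,0,2,1)`): `S(R) = 1 = s − 3`. -/
theorem table1_genus4_second :
    paperS (AddSubgroup.closure {(![1, 1, 1, 0] : Fin 4 → ZMod 3), ![0, 0, 2, 1]}) = 1 := by
  rw [closure_eq_myR]
  unfold paperS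
  rw [toFinset_myR]
  have h2 : myF.filter (fun α => α ≠ 0 ∧ 2 • α = 0) = ∅ := by decide
  have h1 : myF.filter (fun α => 2 • α ≠ 0) =
      { ![1,1,1,0], ![2,2,2,0], ![0,0,2,1], ![0,0,1,2],
        ![1,1,0,1], ![2,2,0,2], ![1,1,2,2], ![2,2,1,1] } := by decide
  rw [h1, h2]
  rw [Finset.sum_insert (by decide), Finset.sum_insert (by decide),
    Finset.sum_insert (by decide), Finset.sum_insert (by decide),
    Finset.sum_insert (by decide), Finset.sum_insert (by decide),
    Finset.sum_insert (by decide), Finset.sum_singleton, Finset.sum_empty]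
  simp only [paperD, Fin.sum_univ_four, Matrix.cons_val_zero, Matrix.cons_val_one,
    Matrix.head_cons, Matrix.cons_val_two, Matrix.tail_cons, Matrix.cons_val_three, neg_neg, Pi.neg_apply,
    show (((0:ZMod 3)).val) = 0 from rfl, show (((1:ZMod 3)).val) = 1 from rfl,
    show (((2:ZMod 3)).val) = 2 from rfl,
    show ((-(0:ZMod 3)).val) = 0 from rfl, show ((-(1:ZMod 3)).val) = 2 from rfl,
    show ((-(2:ZMod 3)).val) = 1 from rfl]
  norm_num
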